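/- Let f : Δ = [a,b]×[c,d] ⊂ [0,∞)² → [0,∞) be convex on the co-ordinates and g : Δ → [0,∞) be s-convex in the second sense on the co-ordinates, with a < b, c < d, s ∈ (0,1], and f·g integrable on Δ. Then 2^{2s+1} f((a+b)/2,(c+d)/2) g((a+b)/2,(c+d)/2) ≤ (2/((b-a)(d-c))) ∫_a^b ∫_c^d f(x,y)g(x,y) dy dx + (4s+6)/((s+1)²(s+2)²)·L + (2s²+6s+6)/((s+1)²(s+2)²)·M + (2s²+8s+6)/((s+1)²(s+2)²)·N, where L = f(a,c)g(a,c)+f(b,c)g(b,c)+f(a,d)g(a,d)+f(b,d)g(b,d), M = f(a,c)g(b,c)+f(b,c)g(a,c)+f(a,d)g(b,d)+f(b,d)g(a,d)+f(a,c)g(a,d)+f(b,c)g(b,d)+f(a,d)g(a,c)+f(b,d)g(b,c), and N = f(a,c)g(b,d)+f(b,c)g(a,d)+f(a,d)g(b,c)+f(b,d)g(a,c). -/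

import Mathlib

/-!
Reflect a point `p` of the box in its two midlines to get four points `pᵣ`. Midpoint convexity
in each coordinate gives `4 f(m) ≤ ∑ f(pᵣ)` and `2^(2s) g(m) ≤ ∑ g(pᵣ)`, so
`2^(2s+2) f(m) g(m) ≤ ∑ᵣ f(pᵣ) g(pᵣ) + ∑_{r ≠ r'} f(pᵣ) g(pᵣ')`. In the off-diagonal terms
`f` and `g` are bounded by their interpolations between the corner values (with weights raised
to the power `s` for `g`). Summed over the reflections, the weight in front of
`f(corner) * g(corner')` only depends on whether the two corners share their `x`- and their
`y`-coordinate, and it is a product of one-variable weights. Integrating over the box, the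
diagonal part becomes `4 ∫∫ f g` because the reflections preserve Lebesgue measure, and the
one-variable weights integrate to `2 / (s + 2)` and `2 / ((s + 1) (s + 2))`.
-/

open MeasureTheory Set

theorem Finset.sum_mul_sum_le_sum_mul_add {ι : Type*} (s : Finset ι) {F G F' G' : ι → ℝ}
    (hF : ∀ i ∈ s, 0 ≤ F i) (hG : ∀ i ∈ s, 0 ≤ G i) (hFF' : ∀ i ∈ s, F i ≤ F' i)
    (hGG' : ∀ i ∈ s, G i ≤ G' i) :
    (∑ i ∈ s, F i) * ∑ i ∈ s, G i ≤
      ∑ i ∈ s, F i * G i + ((∑ i ∈ s, F' i) * (∑ i ∈ s, G' i) - ∑ i ∈ s, F' i * G' i) := by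
  classical
  have hsplit : ∀ u v : ι → ℝ, (∑ i ∈ s, u i) * (∑ i ∈ s, v i) =
      ∑ i ∈ s, u i * v i + ∑ i ∈ s, ∑ j ∈ s.erase i, u i * v j := fun u v => by
    rw [Finset.sum_mul_sum, ← Finset.sum_add_distrib]
    exact Finset.sum_congr rfl fun i hi => (Finset.add_sum_erase s _ hi).symm
  rw [hsplit F G, hsplit F' G', add_sub_cancel_left]
  gcongr with i hi j hj
  · exact hG j (Finset.mem_of_mem_erase hj)
  · exact (hF i hi).trans (hFF' i hi)
  · exact hFF' i hi
  · exact hGG' j (Finset.mem_of_mem_erase hj)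

def SConvexOn (s : ℝ) (I : Set ℝ) (h : ℝ → ℝ) : Prop :=
  ∀ u ∈ I, ∀ v ∈ I, ∀ l ∈ Icc (0 : ℝ) 1,
    h (l * u + (1 - l) * v) ≤ l ^ s * h u + (1 - l) ^ s * h v

theorem ConvexOn.sConvexOn_one {I : Set ℝ} {h : ℝ → ℝ} (hh : ConvexOn ℝ I h) :
    SConvexOn 1 I h := fun _ hu _ hv l hl => by
  simpa using hh.2 hu hv hl.1 (sub_nonneg.2 hl.2) (add_sub_cancel l 1)

theorem SConvexOn.two_rpow_mul_le {s : ℝ} {I : Set ℝ} {h : ℝ → ℝ} (hh : SConvexOn s I h)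
    {u v : ℝ} (hu : u ∈ I) (hv : v ∈ I) :
    2 ^ s * h ((u + v) / 2) ≤ h u + h v := by
  have hmid := hh u hu v hv (1 / 2) ⟨by norm_num, by norm_num⟩
  rw [show (1 : ℝ) - 1 / 2 = 1 / 2 by norm_num, show 1 / 2 * u + 1 / 2 * v = (u + v) / 2 by ring,
    Real.div_rpow zero_le_one zero_le_two, Real.one_rpow] at hmid
  have h2s : 0 < (2 : ℝ) ^ s := Real.rpow_pos_of_pos two_pos s
  calc 2 ^ s * h ((u + v) / 2) ≤ 2 ^ s * (1 / 2 ^ s * h u + 1 / 2 ^ s * h v) := by gcongr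
    _ = h u + h v := by field_simp

theorem two_rpow_two_mul_le_of_coordinates {s : ℝ} {I J : Set ℝ} {h : ℝ → ℝ → ℝ}
    (hx : ∀ y ∈ J, SConvexOn s I fun x => h x y) (hy : ∀ x ∈ I, SConvexOn s J (h x))
    (hJ : Convex ℝ J) {x x' y y' : ℝ} (hxI : x ∈ I) (hx'I : x' ∈ I) (hyJ : y ∈ J)
    (hy'J : y' ∈ J) :
    2 ^ (2 * s) * h ((x + x') / 2) ((y + y') / 2) ≤ h x y + h x y' + h x' y + h x' y' := by
  have hm : (y + y') / 2 ∈ J := by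
    convert hJ hyJ hy'J (by norm_num : (0 : ℝ) ≤ 1 / 2) (by norm_num : (0 : ℝ) ≤ 1 / 2)
      (by norm_num) using 1
    simp only [smul_eq_mul]; ring
  have h2s : 0 ≤ (2 : ℝ) ^ s := Real.rpow_nonneg zero_le_two s
  have h₁ := (hx _ hm).two_rpow_mul_le hxI hx'I
  have h₂ := (hy x hxI).two_rpow_mul_le hyJ hy'J
  have h₃ := (hy x' hx'I).two_rpow_mul_le hyJ hy'J
  rw [two_mul, Real.rpow_add two_pos, mul_assoc]
  nlinarith [mul_le_mul_of_nonneg_left h₁ h2s]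

noncomputable def normCoord (a b x : ℝ) : ℝ := (x - a) / (b - a)

@[fun_prop]
theorem continuous_normCoord (a b : ℝ) : Continuous (normCoord a b) :=
  (continuous_id.sub continuous_const).div_const _

theorem normCoord_mem_Icc {a b x : ℝ} (hab : a < b) (hx : x ∈ Icc a b) :
    normCoord a b x ∈ Icc (0 : ℝ) 1 := by
  have hba : 0 < b - a := sub_pos.2 hab
  exact ⟨div_nonneg (by linarith [hx.1]) hba.le, (div_le_one hba).2 (by linarith [hx.2])⟩

theorem SConvexOn.apply_le_of_mem_Icc {s a b x : ℝ} {h : ℝ → ℝ}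
    (hh : SConvexOn s (Icc a b) h) (hab : a < b) (hx : x ∈ Icc a b) :
    h x ≤ (1 - normCoord a b x) ^ s * h a + normCoord a b x ^ s * h b := by
  have ht := normCoord_mem_Icc hab hx
  have := hh a (left_mem_Icc.2 hab.le) b (right_mem_Icc.2 hab.le) (1 - normCoord a b x)
    ⟨by linarith [ht.2], by linarith [ht.1]⟩
  rwa [sub_sub_cancel, show (1 - normCoord a b x) * a + normCoord a b x * b = x by
    unfold normCoord; field_simp [(sub_pos.2 hab).ne']; ring] at this

noncomputable def cornerInterp (s : ℝ) (h : ℝ → ℝ → ℝ) (a b c d : ℝ) (q : ℝ × ℝ) : ℝ :=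
  ∑ k : Fin 2, ∑ l : Fin 2,
    ![1 - q.1, q.1] k ^ s * ![1 - q.2, q.2] l ^ s * h (![a, b] k) (![c, d] l)

theorem le_cornerInterp {s a b c d : ℝ} {h : ℝ → ℝ → ℝ} (hab : a < b) (hcd : c < d)
    (hx : ∀ y ∈ Icc c d, SConvexOn s (Icc a b) fun x => h x y)
    (hy : ∀ x ∈ Icc a b, SConvexOn s (Icc c d) (h x)) {p : ℝ × ℝ}
    (hp : p ∈ Icc a b ×ˢ Icc c d) :
    h p.1 p.2 ≤ cornerInterp s h a b c d (normCoord a b p.1, normCoord c d p.2) := by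
  obtain ⟨hp₁, hp₂⟩ := hp
  have hτ := normCoord_mem_Icc hcd hp₂
  have hy' := (hy p.1 hp₁).apply_le_of_mem_Icc hcd hp₂
  have hxc := (hx c (left_mem_Icc.2 hcd.le)).apply_le_of_mem_Icc hab hp₁
  have hxd := (hx d (right_mem_Icc.2 hcd.le)).apply_le_of_mem_Icc hab hp₁
  have h₁ : 0 ≤ (1 - normCoord c d p.2) ^ s := Real.rpow_nonneg (by linarith [hτ.2]) s
  have h₂ : 0 ≤ normCoord c d p.2 ^ s := Real.rpow_nonneg hτ.1 s
  simp only [cornerInterp, Fin.sum_univ_two, Matrix.cons_val_zero, Matrix.cons_val_one,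
    Matrix.cons_val_fin_one]
  nlinarith [mul_le_mul_of_nonneg_left hxc h₁, mul_le_mul_of_nonneg_left hxd h₂]

def reflectIcc (a b : ℝ) (i : Fin 2) (x : ℝ) : ℝ := ![x, a + b - x] i

def boxReflect (a b c d : ℝ) (r : Fin 2 × Fin 2) : ℝ × ℝ → ℝ × ℝ :=
  Prod.map (reflectIcc a b r.1) (reflectIcc c d r.2)

section reflectIcc

variable (a b : ℝ) (i : Fin 2)

theorem measurePreserving_reflectIcc : MeasurePreserving (reflectIcc a b i) := by
  fin_cases i
  · exact MeasurePreserving.id volume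
  · exact Measure.measurePreserving_sub_left volume (a + b)

theorem measurableEmbedding_reflectIcc : MeasurableEmbedding (reflectIcc a b i) := by
  fin_cases i
  · exact MeasurableEmbedding.id
  · exact measurableEmbedding_subLeft (a + b)

theorem reflectIcc_preimage_Icc : reflectIcc a b i ⁻¹' Icc a b = Icc a b := by
  fin_cases i
  · rfl
  · ext x
    simp only [reflectIcc, Fin.mk_one, mem_preimage, mem_Icc, Matrix.cons_val_one,
      Matrix.cons_val_fin_one]
    constructor <;> rintro ⟨h₁, h₂⟩ <;> constructor <;> linarith

theorem reflectIcc_mem_Icc {x : ℝ} (hx : x ∈ Icc a b) : reflectIcc a b i x ∈ Icc a b := by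
  rwa [← mem_preimage, reflectIcc_preimage_Icc]

end reflectIcc

theorem normCoord_reflectIcc {a b : ℝ} (hab : a ≠ b) (i : Fin 2) (x : ℝ) :
    normCoord a b (reflectIcc a b i x) = reflectIcc 0 1 i (normCoord a b x) := by
  fin_cases i
  · rfl
  · simp only [reflectIcc, normCoord, Fin.mk_one, Matrix.cons_val_one, Matrix.cons_val_fin_one,
      zero_add]
    field_simp [sub_ne_zero.2 hab.symm]
    ring

section boxReflect

variable (a b c d : ℝ) (r : Fin 2 × Fin 2)

theorem measurePreserving_boxReflect : MeasurePreserving (boxReflect a b c d r) := by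
  rw [Measure.volume_eq_prod]
  exact (measurePreserving_reflectIcc a b r.1).prod (measurePreserving_reflectIcc c d r.2)

theorem measurableEmbedding_boxReflect : MeasurableEmbedding (boxReflect a b c d r) :=
  (measurableEmbedding_reflectIcc a b r.1).prodMap (measurableEmbedding_reflectIcc c d r.2)

theorem boxReflect_preimage :
    boxReflect a b c d r ⁻¹' (Icc a b ×ˢ Icc c d) = Icc a b ×ˢ Icc c d := by
  rw [boxReflect, preimage_prod_map_prod, reflectIcc_preimage_Icc, reflectIcc_preimage_Icc]

theorem boxReflect_mem {p : ℝ × ℝ} (hp : p ∈ Icc a b ×ˢ Icc c d) :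
    boxReflect a b c d r p ∈ Icc a b ×ˢ Icc c d := by
  rwa [← mem_preimage, boxReflect_preimage]

theorem integrableOn_comp_boxReflect {F : ℝ × ℝ → ℝ}
    (hF : IntegrableOn F (Icc a b ×ˢ Icc c d)) :
    IntegrableOn (fun p => F (boxReflect a b c d r p)) (Icc a b ×ˢ Icc c d) := by
  rwa [← (measurePreserving_boxReflect a b c d r).integrableOn_comp_preimage
    (measurableEmbedding_boxReflect a b c d r), boxReflect_preimage] at hF

theorem setIntegral_comp_boxReflect (F : ℝ × ℝ → ℝ) :
    ∫ p in Icc a b ×ˢ Icc c d, F (boxReflect a b c d r p) = ∫ p in Icc a b ×ˢ Icc c d, F p := by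
  simpa only [boxReflect_preimage] using
    (measurePreserving_boxReflect a b c d r).setIntegral_preimage_emb
      (measurableEmbedding_boxReflect a b c d r) F (Icc a b ×ˢ Icc c d)

end boxReflect

theorem normCoord_boxReflect {a b c d : ℝ} (hab : a ≠ b) (hcd : c ≠ d) (r : Fin 2 × Fin 2)
    (p : ℝ × ℝ) :
    (normCoord a b (boxReflect a b c d r p).1, normCoord c d (boxReflect a b c d r p).2) =
      boxReflect 0 1 0 1 r (normCoord a b p.1, normCoord c d p.2) := by
  simp only [boxReflect, Prod.map_fst, Prod.map_snd, normCoord_reflectIcc hab,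
    normCoord_reflectIcc hcd, Prod.map_apply]

theorem integrableOn_sum_boxReflect {a b c d : ℝ} {F : ℝ × ℝ → ℝ}
    (hF : IntegrableOn F (Icc a b ×ˢ Icc c d)) :
    IntegrableOn (fun p => ∑ r, F (boxReflect a b c d r p)) (Icc a b ×ˢ Icc c d) :=
  integrable_finsetSum _ fun r _ => integrableOn_comp_boxReflect a b c d r hF

theorem setIntegral_sum_boxReflect {a b c d : ℝ} {F : ℝ × ℝ → ℝ}
    (hF : IntegrableOn F (Icc a b ×ˢ Icc c d)) :
    ∫ p in Icc a b ×ˢ Icc c d, ∑ r, F (boxReflect a b c d r p) =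
      4 * ∫ p in Icc a b ×ˢ Icc c d, F p := by
  rw [integral_finsetSum _ fun r _ => integrableOn_comp_boxReflect a b c d r hF]
  simp only [setIntegral_comp_boxReflect, Finset.sum_const, Finset.card_univ, Fintype.card_prod,
    Fintype.card_fin, nsmul_eq_mul]
  norm_num

theorem intervalIntegral.integral_comp_one_sub (u : ℝ → ℝ) :
    ∫ t in (0 : ℝ)..1, u (1 - t) = ∫ t in (0 : ℝ)..1, u t := by
  simp [intervalIntegral.integral_comp_sub_left u 1]

theorem integral_mul_rpow {s : ℝ} (hs : 0 ≤ s) :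
    ∫ t in (0 : ℝ)..1, t * t ^ s = 1 / (s + 2) := by
  have hcongr : EqOn (fun t : ℝ => t * t ^ s) (fun t => t ^ (s + 1)) (uIcc 0 1) := fun t ht => by
    rw [uIcc_of_le zero_le_one] at ht
    simp only [Real.rpow_add_one' ht.1 (by linarith), mul_comm]
  rw [intervalIntegral.integral_congr hcongr, integral_rpow (Or.inl (by linarith))]
  norm_num [Real.zero_rpow (by linarith : s + 1 + 1 ≠ 0)]
  ring

theorem integral_one_sub_mul_rpow {s : ℝ} (hs : 0 ≤ s) :
    ∫ t in (0 : ℝ)..1, (1 - t) * t ^ s = 1 / ((s + 1) * (s + 2)) := by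
  have hrpow : Continuous fun t : ℝ => t ^ s := Real.continuous_rpow_const hs
  have hmul : IntervalIntegrable (fun t : ℝ => t * t ^ s) volume 0 1 :=
    (continuous_id.mul hrpow).intervalIntegrable 0 1
  simp only [sub_mul, one_mul]
  rw [intervalIntegral.integral_sub (hrpow.intervalIntegrable 0 1) hmul, integral_mul_rpow hs,
    integral_rpow (Or.inl (by linarith))]
  norm_num [Real.zero_rpow (by linarith : s + 1 ≠ 0)]
  field_simp
  ring

/-- The weight carried by a pair of endpoints at offset `i` once the reflection `t ↦ 1 - t` is
summed over; see `cornerPairing` for the indexing. -/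
noncomputable def pairWeight (s : ℝ) (i : Fin 2) (t : ℝ) : ℝ :=
  ∑ k : Fin 2, ![1 - t, t] k * ![1 - t, t] (k + i) ^ s

theorem pairWeight_zero (s t : ℝ) : pairWeight s 0 t = (1 - t) * (1 - t) ^ s + t * t ^ s := by
  simp [pairWeight]

theorem pairWeight_one (s t : ℝ) : pairWeight s 1 t = (1 - t) * t ^ s + t * (1 - t) ^ s := by
  simp [pairWeight]

theorem continuous_pairWeight {s : ℝ} (hs : 0 ≤ s) (i : Fin 2) :
    Continuous (pairWeight s i) := by
  have hrpow : Continuous fun t : ℝ => t ^ s := Real.continuous_rpow_const hs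
  unfold pairWeight
  fin_cases i <;> simp <;> fun_prop

theorem integral_pairWeight_zero {s : ℝ} (hs : 0 ≤ s) :
    ∫ t in (0 : ℝ)..1, pairWeight s 0 t = 2 / (s + 2) := by
  have hrpow : Continuous fun t : ℝ => t ^ s := Real.continuous_rpow_const hs
  simp only [pairWeight_zero]
  rw [intervalIntegral.integral_add ((by fun_prop : Continuous _).intervalIntegrable _ _)
    ((by fun_prop : Continuous _).intervalIntegrable _ _),
    intervalIntegral.integral_comp_one_sub (fun t => t * t ^ s), integral_mul_rpow hs]
  ring

theorem integral_pairWeight_one {s : ℝ} (hs : 0 ≤ s) :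
    ∫ t in (0 : ℝ)..1, pairWeight s 1 t = 2 / ((s + 1) * (s + 2)) := by
  have hrpow : Continuous fun t : ℝ => t ^ s := Real.continuous_rpow_const hs
  have hswap := intervalIntegral.integral_comp_one_sub fun t => (1 - t) * t ^ s
  simp only [sub_sub_cancel] at hswap
  simp only [pairWeight_one]
  rw [intervalIntegral.integral_add ((by fun_prop : Continuous _).intervalIntegrable _ _)
    ((by fun_prop : Continuous _).intervalIntegrable _ _), hswap, integral_one_sub_mul_rpow hs]
  ring

theorem setIntegral_Icc_comp_normCoord {a b : ℝ} (hab : a < b) (u : ℝ → ℝ) :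
    ∫ x in Icc a b, u (normCoord a b x) = (b - a) * ∫ t in (0 : ℝ)..1, u t := by
  have hba : b - a ≠ 0 := (sub_pos.2 hab).ne'
  rw [integral_Icc_eq_integral_Ioc, ← intervalIntegral.integral_of_le hab.le]
  simp only [normCoord, sub_div]
  rw [intervalIntegral.integral_comp_div_sub u hba, sub_self, div_sub_div_same, div_self hba,
    smul_eq_mul]

theorem setIntegral_Icc_prod_Icc_eq_intervalIntegral {a b c d : ℝ} (hab : a ≤ b) (hcd : c ≤ d)
    {F : ℝ → ℝ → ℝ} (hF : IntegrableOn (fun p : ℝ × ℝ => F p.1 p.2) (Icc a b ×ˢ Icc c d)) :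
    ∫ p in Icc a b ×ˢ Icc c d, F p.1 p.2 = ∫ x in a..b, ∫ y in c..d, F x y := by
  rw [Measure.volume_eq_prod] at hF ⊢
  rw [setIntegral_prod _ hF, intervalIntegral.integral_of_le hab, ← integral_Icc_eq_integral_Ioc]
  refine setIntegral_congr_fun measurableSet_Icc fun x _ => ?_
  rw [intervalIntegral.integral_of_le hcd, ← integral_Icc_eq_integral_Ioc]

theorem integrableOn_mul_normCoord {a b c d : ℝ} {u v : ℝ → ℝ} (hu : Continuous u)
    (hv : Continuous v) :
    IntegrableOn (fun p : ℝ × ℝ => u (normCoord a b p.1) * v (normCoord c d p.2))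
      (Icc a b ×ˢ Icc c d) := by
  rw [Icc_prod_Icc]
  exact Continuous.integrableOn_Icc (by fun_prop)

section normCoordKernel

variable {ι : Type*} [Fintype ι] {w : ι → ℝ → ℝ} {a b c d : ℝ}

theorem integrableOn_sum_mul_normCoord (hw : ∀ i, Continuous (w i)) (κ : ι → ι → ℝ) :
    IntegrableOn
      (fun p : ℝ × ℝ => ∑ i, ∑ j, κ i j * (w i (normCoord a b p.1) * w j (normCoord c d p.2)))
      (Icc a b ×ˢ Icc c d) :=
  integrable_finsetSum _ fun i _ => integrable_finsetSum _ fun j _ =>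
    (integrableOn_mul_normCoord (hw i) (hw j)).const_mul (κ i j)

theorem setIntegral_sum_mul_normCoord (hw : ∀ i, Continuous (w i)) (κ : ι → ι → ℝ)
    (hab : a < b) (hcd : c < d) :
    ∫ p in Icc a b ×ˢ Icc c d,
        ∑ i, ∑ j, κ i j * (w i (normCoord a b p.1) * w j (normCoord c d p.2)) =
      (b - a) * (d - c) *
        ∑ i, ∑ j, κ i j * ((∫ t in (0 : ℝ)..1, w i t) * ∫ t in (0 : ℝ)..1, w j t) := by
  have hint : ∀ i j, IntegrableOn
      (fun p : ℝ × ℝ => κ i j * (w i (normCoord a b p.1) * w j (normCoord c d p.2)))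
      (Icc a b ×ˢ Icc c d) := fun i j =>
    (integrableOn_mul_normCoord (hw i) (hw j)).const_mul (κ i j)
  rw [integral_finsetSum _ fun i _ => integrable_finsetSum _ fun j _ => hint i j, Finset.mul_sum]
  refine Finset.sum_congr rfl fun i _ => ?_
  rw [integral_finsetSum _ fun j _ => hint i j, Finset.mul_sum]
  refine Finset.sum_congr rfl fun j _ => ?_
  rw [integral_const_mul, Measure.volume_eq_prod,
    setIntegral_prod_mul (fun x => w i (normCoord a b x)) (fun y => w j (normCoord c d y)),
    setIntegral_Icc_comp_normCoord hab, setIntegral_Icc_comp_normCoord hcd]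
  ring

end normCoordKernel

/-- Adding `1 : Fin 2` to an index swaps the endpoint, so `i` and `j` record whether `g` is
evaluated at the corner opposite to that of `f` in the first and in the second coordinate. -/
def cornerPairing (f g : ℝ → ℝ → ℝ) (a b c d : ℝ) (i j : Fin 2) : ℝ :=
  ∑ k : Fin 2, ∑ l : Fin 2, f (![a, b] k) (![c, d] l) * g (![a, b] (k + i)) (![c, d] (l + j))

theorem sum_mul_sum_sub_sum_mul_cornerInterp (f g : ℝ → ℝ → ℝ) (a b c d s : ℝ) (q : ℝ × ℝ) :
    (∑ r, cornerInterp 1 f a b c d (boxReflect 0 1 0 1 r q)) *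
        (∑ r, cornerInterp s g a b c d (boxReflect 0 1 0 1 r q)) -
      ∑ r, cornerInterp 1 f a b c d (boxReflect 0 1 0 1 r q) *
        cornerInterp s g a b c d (boxReflect 0 1 0 1 r q) =
    ∑ i, ∑ j, ((∑ i', ∑ j', cornerPairing f g a b c d i' j') - cornerPairing f g a b c d i j) *
      (pairWeight s i q.1 * pairWeight s j q.2) := by
  simp only [cornerInterp, boxReflect, reflectIcc, pairWeight, cornerPairing, Prod.map_fst,
    Prod.map_snd, Fintype.sum_prod_type, Fin.sum_univ_two, Fin.isValue, Matrix.cons_val_zero,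
    Matrix.cons_val_one, Matrix.cons_val_fin_one, Fin.reduceAdd, zero_add, add_zero,
    sub_sub_cancel, Real.rpow_one]
  ring

theorem sum_sub_mul_integral_pairWeight {s : ℝ} (hs : 0 ≤ s) (P : Fin 2 → Fin 2 → ℝ) :
    ∑ i, ∑ j, ((∑ i', ∑ j', P i' j') - P i j) *
        ((∫ t in (0 : ℝ)..1, pairWeight s i t) * ∫ t in (0 : ℝ)..1, pairWeight s j t) =
      2 * ((4 * s + 6) / ((s + 1) ^ 2 * (s + 2) ^ 2) * P 0 0 +
        (2 * s ^ 2 + 6 * s + 6) / ((s + 1) ^ 2 * (s + 2) ^ 2) * (P 1 0 + P 0 1) +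
        (2 * s ^ 2 + 8 * s + 6) / ((s + 1) ^ 2 * (s + 2) ^ 2) * P 1 1) := by
  simp only [Fin.sum_univ_two, integral_pairWeight_zero hs, integral_pairWeight_one hs]
  field_simp
  ring

theorem two_rpow_mul_midpoint_le_sum_boxReflect {s a b c d : ℝ} {h : ℝ → ℝ → ℝ}
    (hx : ∀ y ∈ Icc c d, SConvexOn s (Icc a b) fun x => h x y)
    (hy : ∀ x ∈ Icc a b, SConvexOn s (Icc c d) (h x)) {p : ℝ × ℝ}
    (hp : p ∈ Icc a b ×ˢ Icc c d) :
    2 ^ (2 * s) * h ((a + b) / 2) ((c + d) / 2) ≤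
      ∑ r, h (boxReflect a b c d r p).1 (boxReflect a b c d r p).2 := by
  simpa [boxReflect, reflectIcc, Fintype.sum_prod_type, Fin.sum_univ_two, ← add_assoc] using
    two_rpow_two_mul_le_of_coordinates hx hy (convex_Icc c d) hp.1
      (reflectIcc_mem_Icc a b 1 hp.1) hp.2 (reflectIcc_mem_Icc c d 1 hp.2)

theorem two_rpow_mul_mul_midpoint_le {a b c d s : ℝ} (hab : a < b) (hcd : c < d) {f g : ℝ → ℝ → ℝ}
    (hf0 : ∀ x ∈ Icc a b, ∀ y ∈ Icc c d, 0 ≤ f x y)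
    (hg0 : ∀ x ∈ Icc a b, ∀ y ∈ Icc c d, 0 ≤ g x y)
    (hfx : ∀ y ∈ Icc c d, SConvexOn 1 (Icc a b) fun x => f x y)
    (hfy : ∀ x ∈ Icc a b, SConvexOn 1 (Icc c d) (f x))
    (hgx : ∀ y ∈ Icc c d, SConvexOn s (Icc a b) fun x => g x y)
    (hgy : ∀ x ∈ Icc a b, SConvexOn s (Icc c d) (g x)) {p : ℝ × ℝ}
    (hp : p ∈ Icc a b ×ˢ Icc c d) :
    2 ^ (2 * s + 2) * (f ((a + b) / 2) ((c + d) / 2) * g ((a + b) / 2) ((c + d) / 2)) ≤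
      ∑ r, f (boxReflect a b c d r p).1 (boxReflect a b c d r p).2 *
          g (boxReflect a b c d r p).1 (boxReflect a b c d r p).2 +
        ∑ i, ∑ j, ((∑ i', ∑ j', cornerPairing f g a b c d i' j') - cornerPairing f g a b c d i j) *
          (pairWeight s i (normCoord a b p.1) * pairWeight s j (normCoord c d p.2)) := by
  set R := boxReflect a b c d
  set q := (normCoord a b p.1, normCoord c d p.2)
  have hR : ∀ r, R r p ∈ Icc a b ×ˢ Icc c d := fun r => boxReflect_mem a b c d r hp
  have hm₁ : (a + b) / 2 ∈ Icc a b := ⟨by linarith, by linarith⟩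
  have hm₂ : (c + d) / 2 ∈ Icc c d := ⟨by linarith, by linarith⟩
  have hmid : 2 ^ (2 * s + 2) * (f ((a + b) / 2) ((c + d) / 2) * g ((a + b) / 2) ((c + d) / 2)) ≤
      (∑ r, f (R r p).1 (R r p).2) * ∑ r, g (R r p).1 (R r p).2 := by
    calc _ = (2 ^ (2 * (1 : ℝ)) * f ((a + b) / 2) ((c + d) / 2)) *
          (2 ^ (2 * s) * g ((a + b) / 2) ((c + d) / 2)) := by
          rw [Real.rpow_add two_pos, mul_one]; ring
      _ ≤ _ := mul_le_mul (two_rpow_mul_midpoint_le_sum_boxReflect hfx hfy hp)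
          (two_rpow_mul_midpoint_le_sum_boxReflect hgx hgy hp)
          (mul_nonneg (by positivity) (hg0 _ hm₁ _ hm₂))
          (Finset.sum_nonneg fun r _ => hf0 _ (hR r).1 _ (hR r).2)
  have hcross := Finset.sum_mul_sum_le_sum_mul_add Finset.univ
    (F' := fun r => cornerInterp 1 f a b c d (boxReflect 0 1 0 1 r q))
    (G' := fun r => cornerInterp s g a b c d (boxReflect 0 1 0 1 r q))
    (fun r _ => hf0 _ (hR r).1 _ (hR r).2) (fun r _ => hg0 _ (hR r).1 _ (hR r).2)
    (fun r _ => normCoord_boxReflect hab.ne hcd.ne r p ▸ le_cornerInterp hab hcd hfx hfy (hR r))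
    (fun r _ => normCoord_boxReflect hab.ne hcd.ne r p ▸ le_cornerInterp hab hcd hgx hgy (hR r))
  rw [sum_mul_sum_sub_sum_mul_cornerInterp] at hcross
  linarith

theorem two_rpow_mul_mul_midpoint_le_integral {a b c d s : ℝ} (hab : a < b) (hcd : c < d)
    (hs : 0 ≤ s) {f g : ℝ → ℝ → ℝ}
    (hf0 : ∀ x ∈ Icc a b, ∀ y ∈ Icc c d, 0 ≤ f x y)
    (hg0 : ∀ x ∈ Icc a b, ∀ y ∈ Icc c d, 0 ≤ g x y)
    (hfx : ∀ y ∈ Icc c d, SConvexOn 1 (Icc a b) fun x => f x y)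
    (hfy : ∀ x ∈ Icc a b, SConvexOn 1 (Icc c d) (f x))
    (hgx : ∀ y ∈ Icc c d, SConvexOn s (Icc a b) fun x => g x y)
    (hgy : ∀ x ∈ Icc a b, SConvexOn s (Icc c d) (g x))
    (hint : IntegrableOn (fun p : ℝ × ℝ => f p.1 p.2 * g p.1 p.2) (Icc a b ×ˢ Icc c d)) :
    (b - a) * (d - c) *
        (2 ^ (2 * s + 2) * (f ((a + b) / 2) ((c + d) / 2) * g ((a + b) / 2) ((c + d) / 2))) ≤
      4 * (∫ x in a..b, ∫ y in c..d, f x y * g x y) +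
        (b - a) * (d - c) * ∑ i, ∑ j,
          ((∑ i', ∑ j', cornerPairing f g a b c d i' j') - cornerPairing f g a b c d i j) *
            ((∫ t in (0 : ℝ)..1, pairWeight s i t) * ∫ t in (0 : ℝ)..1, pairWeight s j t) := by
  have hK := integrableOn_sum_mul_normCoord (a := a) (b := b) (c := c) (d := d)
    (continuous_pairWeight hs) fun i j =>
      (∑ i', ∑ j', cornerPairing f g a b c d i' j') - cornerPairing f g a b c d i j
  have hmono := setIntegral_mono_on
    (integrableOn_const (isCompact_Icc.prod isCompact_Icc).measure_lt_top.ne)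
    ((integrableOn_sum_boxReflect hint).add hK) (measurableSet_Icc.prod measurableSet_Icc)
    fun p hp => two_rpow_mul_mul_midpoint_le hab hcd hf0 hg0 hfx hfy hgx hgy hp
  rwa [setIntegral_const, Measure.volume_eq_prod, measureReal_prod_prod,
    Real.volume_real_Icc_of_le hab.le, Real.volume_real_Icc_of_le hcd.le, smul_eq_mul,
    ← Measure.volume_eq_prod, integral_add' (integrableOn_sum_boxReflect hint) hK,
    setIntegral_sum_boxReflect hint,
    setIntegral_sum_mul_normCoord (continuous_pairWeight hs) _ hab hcd,
    setIntegral_Icc_prod_Icc_eq_intervalIntegral (F := fun x y => f x y * g x y) hab.le hcd.le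
      hint] at hmono

theorem product_hadamard_coordinates_midpoint_sconvex_general
    (a b c d s : ℝ) (hab : a < b) (hcd : c < d)
    (hs : s ∈ Set.Ioc (0:ℝ) 1) (f g : ℝ → ℝ → ℝ)
    (hf0 : ∀ x ∈ Set.Icc a b, ∀ y ∈ Set.Icc c d, 0 ≤ f x y)
    (hg0 : ∀ x ∈ Set.Icc a b, ∀ y ∈ Set.Icc c d, 0 ≤ g x y)
    (hfx : ∀ y ∈ Set.Icc c d, ConvexOn ℝ (Set.Icc a b) (fun x => f x y))
    (hfy : ∀ x ∈ Set.Icc a b, ConvexOn ℝ (Set.Icc c d) (fun y => f x y))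
    (hgx : ∀ y ∈ Set.Icc c d, ∀ u ∈ Set.Icc a b, ∀ v ∈ Set.Icc a b,
        ∀ l ∈ Set.Icc (0:ℝ) 1,
      g (l * u + (1 - l) * v) y ≤ l ^ s * g u y + (1 - l) ^ s * g v y)
    (hgy : ∀ x ∈ Set.Icc a b, ∀ u ∈ Set.Icc c d, ∀ v ∈ Set.Icc c d,
        ∀ l ∈ Set.Icc (0:ℝ) 1,
      g x (l * u + (1 - l) * v) ≤ l ^ s * g x u + (1 - l) ^ s * g x v)
    (hint : IntegrableOn (fun p : ℝ × ℝ => f p.1 p.2 * g p.1 p.2)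
      (Set.Icc a b ×ˢ Set.Icc c d) volume) :
    2 ^ (2 * s + 1) * f ((a + b) / 2) ((c + d) / 2) * g ((a + b) / 2) ((c + d) / 2) ≤
      (2 / ((b - a) * (d - c))) * (∫ x in a..b, ∫ y in c..d, f x y * g x y) +
      ((4 * s + 6) / ((s + 1) ^ 2 * (s + 2) ^ 2)) *
        (f a c * g a c + f b c * g b c + f a d * g a d + f b d * g b d) +
      ((2 * s ^ 2 + 6 * s + 6) / ((s + 1) ^ 2 * (s + 2) ^ 2)) *
        (f a c * g b c + f b c * g a c + f a d * g b d + f b d * g a d +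
          f a c * g a d + f b c * g b d + f a d * g a c + f b d * g b c) +
      ((2 * s ^ 2 + 8 * s + 6) / ((s + 1) ^ 2 * (s + 2) ^ 2)) *
        (f a c * g b d + f b c * g a d + f a d * g b c + f b d * g a c) := by
  have h := two_rpow_mul_mul_midpoint_le_integral hab hcd hs.1.le hf0 hg0
    (fun y hy => (hfx y hy).sConvexOn_one) (fun x hx => (hfy x hx).sConvexOn_one) hgx hgy hint
  rw [sum_sub_mul_integral_pairWeight hs.1.le, show 2 * s + 2 = 2 * s + 1 + 1 by ring,
    Real.rpow_add_one two_ne_zero] at h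
  simp only [cornerPairing, Fin.sum_univ_two, Matrix.cons_val_zero, Matrix.cons_val_one,
    Matrix.cons_val_fin_one, Fin.reduceAdd, zero_add, add_zero] at h
  have hA : 0 < (b - a) * (d - c) := mul_pos (sub_pos.2 hab) (sub_pos.2 hcd)
  rw [div_mul_eq_mul_div, add_assoc, add_assoc, div_add' _ _ _ hA.ne', le_div_iff₀ hA]
  linear_combination h / 2

theorem product_hadamard_coordinates_midpoint_sconvex
    (a b c d s : ℝ) (ha : 0 ≤ a) (hc : 0 ≤ c) (hab : a < b) (hcd : c < d)
    (hs : s ∈ Set.Ioc (0:ℝ) 1) (f g : ℝ → ℝ → ℝ)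
    (hf0 : ∀ x ∈ Set.Icc a b, ∀ y ∈ Set.Icc c d, 0 ≤ f x y)
    (hg0 : ∀ x ∈ Set.Icc a b, ∀ y ∈ Set.Icc c d, 0 ≤ g x y)
    (hfx : ∀ y ∈ Set.Icc c d, ConvexOn ℝ (Set.Icc a b) (fun x => f x y))
    (hfy : ∀ x ∈ Set.Icc a b, ConvexOn ℝ (Set.Icc c d) (fun y => f x y))
    (hgx : ∀ y ∈ Set.Icc c d, ∀ u ∈ Set.Icc a b, ∀ v ∈ Set.Icc a b,
        ∀ l ∈ Set.Icc (0:ℝ) 1,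
      g (l * u + (1 - l) * v) y ≤ l ^ s * g u y + (1 - l) ^ s * g v y)
    (hgy : ∀ x ∈ Set.Icc a b, ∀ u ∈ Set.Icc c d, ∀ v ∈ Set.Icc c d,
        ∀ l ∈ Set.Icc (0:ℝ) 1,
      g x (l * u + (1 - l) * v) ≤ l ^ s * g x u + (1 - l) ^ s * g x v)
    (hint : IntegrableOn (fun p : ℝ × ℝ => f p.1 p.2 * g p.1 p.2)
      (Set.Icc a b ×ˢ Set.Icc c d) volume) :
    2 ^ (2 * s + 1) * f ((a + b) / 2) ((c + d) / 2) * g ((a + b) / 2) ((c + d) / 2) ≤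
      (2 / ((b - a) * (d - c))) * (∫ x in a..b, ∫ y in c..d, f x y * g x y) +
      ((4 * s + 6) / ((s + 1) ^ 2 * (s + 2) ^ 2)) *
        (f a c * g a c + f b c * g b c + f a d * g a d + f b d * g b d) +
      ((2 * s ^ 2 + 6 * s + 6) / ((s + 1) ^ 2 * (s + 2) ^ 2)) *
        (f a c * g b c + f b c * g a c + f a d * g b d + f b d * g a d +
          f a c * g a d + f b c * g b d + f a d * g a c + f b d * g b c) +
      ((2 * s ^ 2 + 8 * s + 6) / ((s + 1) ^ 2 * (s + 2) ^ 2)) *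
        (f a c * g b d + f b c * g a d + f a d * g b c + f b d * g a c) :=
  product_hadamard_coordinates_midpoint_sconvex_general a b c d s hab hcd hs f g hf0 hg0 hfx hfy hgx
    hgy hint
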